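/- arXiv:1509.07950 — 2 statements merged into one kernel-verified Lean document; each statement's English description precedes it below -/
import Mathlib

section
/- Let τ > 0 and let a < b be real numbers. Define G(p) = ∫_a^b N(y; p, τ) dy for p ∈ ℝ. Then G(p) > 0 for all p, G is differentiable, and its log-derivative satisfies G′(p)/G(p) = (m(p) − p)/τ, where m(p) = (∫_a^b y · N(y; p, τ) dy)/G(p) is the mean of the Gaussian N(·; p, τ) truncated to the interval (a, b]. (This is the real-valued form of the paper's nonlinear output step g(p, v_p) = (r̃ − p)/(v_p + σ_n²) in equation (3.4a).) -/
open MeasureTheory Real intervalIntegral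

/-- The Gaussian probability density with mean `μ` and variance `τ`. -/
noncomputable def gauss (μ τ x : ℝ) : ℝ :=
  (Real.sqrt (2 * Real.pi * τ))⁻¹ * Real.exp (-(x - μ) ^ 2 / (2 * τ))

/-- `G τ a b p = ∫_a^b N(y; p, τ) dy`. -/
noncomputable def G (τ a b p : ℝ) : ℝ := ∫ y in a..b, gauss p τ y

/-- The mean of the Gaussian `N(·; p, τ)` truncated to `(a, b]`. -/
noncomputable def truncMean (τ a b p : ℝ) : ℝ :=
  (∫ y in a..b, y * gauss p τ y) / G τ a b p

lemma gauss_pos {τ : ℝ} (hτ : 0 < τ) (μ x : ℝ) : 0 < gauss μ τ x := by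
  have h : 0 < 2 * Real.pi * τ := by positivity
  unfold gauss
  positivity

lemma gauss_continuous (μ τ : ℝ) : Continuous (gauss μ τ) := by
  unfold gauss
  fun_prop

lemma gauss_shift (p τ y : ℝ) : gauss p τ y = gauss 0 τ (y - p) := by
  simp [gauss]

lemma hasDerivAt_gauss {τ : ℝ} (hτ : 0 < τ) (u : ℝ) :
    HasDerivAt (gauss 0 τ) (-(u / τ) * gauss 0 τ u) u := by
  have h1 : HasDerivAt (fun u : ℝ => -(u - 0) ^ 2 / (2 * τ)) (-(u / τ)) u := by
    have := (((hasDerivAt_id u).sub_const 0).pow 2).neg.div_const (2 * τ)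
    refine this.congr_deriv (Eq.symm ?_)
    field_simp
    simp only [id]
    ring
  have h2 := (h1.exp).const_mul ((Real.sqrt (2 * Real.pi * τ))⁻¹)
  refine h2.congr_deriv (Eq.symm ?_)
  unfold gauss
  ring

lemma Phi_hasDerivAt {τ : ℝ} (t : ℝ) :
    HasDerivAt (fun t => ∫ u in (0:ℝ)..t, gauss 0 τ u) (gauss 0 τ t) t := by
  have hcont := gauss_continuous 0 τ
  exact intervalIntegral.integral_hasDerivAt_right
    (hcont.intervalIntegrable 0 t)
    hcont.aestronglyMeasurable.stronglyMeasurableAtFilter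
    hcont.continuousAt

lemma G_eq (τ a b p : ℝ) :
    G τ a b p = (∫ u in (0:ℝ)..(b - p), gauss 0 τ u) - ∫ u in (0:ℝ)..(a - p), gauss 0 τ u := by
  have hcont := gauss_continuous 0 τ
  have h1 : G τ a b p = ∫ u in (a - p)..(b - p), gauss 0 τ u := by
    rw [G]
    simp_rw [gauss_shift p τ]
    exact intervalIntegral.integral_comp_sub_right (gauss 0 τ) p
  rw [h1, ← intervalIntegral.integral_interval_sub_left
    (hcont.intervalIntegrable 0 (b - p)) (hcont.intervalIntegrable 0 (a - p))]

lemma hasDerivAt_G {τ : ℝ} (hτ : 0 < τ) (a b p : ℝ) :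
    HasDerivAt (G τ a b) (gauss 0 τ (a - p) - gauss 0 τ (b - p)) p := by
  have hb : HasDerivAt (fun q : ℝ => ∫ u in (0:ℝ)..(b - q), gauss 0 τ u)
      (gauss 0 τ (b - p) * (-1)) p :=
    (Phi_hasDerivAt (τ := τ) (b - p)).comp p
      (by exact (hasDerivAt_id' p).const_sub b)
  have ha : HasDerivAt (fun q : ℝ => ∫ u in (0:ℝ)..(a - q), gauss 0 τ u)
      (gauss 0 τ (a - p) * (-1)) p :=
    (Phi_hasDerivAt (τ := τ) (a - p)).comp p
      (by exact (hasDerivAt_id' p).const_sub a)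
  have h := hb.sub ha
  have heq : G τ a b = fun q : ℝ =>
      (∫ u in (0:ℝ)..(b - q), gauss 0 τ u) - ∫ u in (0:ℝ)..(a - q), gauss 0 τ u := by
    funext q; exact G_eq τ a b q
  rw [heq]
  refine h.congr_deriv (Eq.symm ?_)
  ring

/-- `G` is positive, differentiable, and its log-derivative is `(m(p) − p)/τ`. -/
theorem quantized_output_step (τ a b : ℝ) (hτ : 0 < τ) (hab : a < b) :
    (∀ p, 0 < G τ a b p) ∧ Differentiable ℝ (G τ a b) ∧
      ∀ p, deriv (G τ a b) p / G τ a b p = (truncMean τ a b p - p) / τ := by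
  have hGpos : ∀ p, 0 < G τ a b p := by
    intro p
    exact intervalIntegral.intervalIntegral_pos_of_pos
      ((gauss_continuous p τ).intervalIntegrable a b) (fun x => gauss_pos hτ p x) hab
  refine ⟨hGpos, fun p => (hasDerivAt_G hτ a b p).differentiableAt, fun p => ?_⟩
  have hderiv : deriv (G τ a b) p = gauss 0 τ (a - p) - gauss 0 τ (b - p) :=
    (hasDerivAt_G hτ a b p).deriv
  -- key integral identity
  have hkey : ∫ y in a..b, (y - p) * gauss p τ y
      = τ * (gauss 0 τ (a - p) - gauss 0 τ (b - p)) := by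
    have hFTC : ∫ y in a..b, (y - p) * gauss p τ y
        = (-τ * gauss 0 τ (b - p)) - (-τ * gauss 0 τ (a - p)) := by
      apply intervalIntegral.integral_eq_sub_of_hasDerivAt
      · intro y _
        have h1 := ((hasDerivAt_gauss hτ (y - p)).comp y
          ((hasDerivAt_id y).sub_const p)).const_mul (-τ)
        refine h1.congr_deriv (Eq.symm ?_)
        rw [gauss_shift]
        field_simp
      · exact (Continuous.intervalIntegrable (by
          have := gauss_continuous p τ; fun_prop) a b)
    rw [hFTC]; ring
  have hsplit : ∫ y in a..b, (y - p) * gauss p τ y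
      = (∫ y in a..b, y * gauss p τ y) - p * G τ a b p := by
    have h1 : IntervalIntegrable (fun y => y * gauss p τ y) volume a b :=
      Continuous.intervalIntegrable (by have := gauss_continuous p τ; fun_prop) a b
    have h2 : IntervalIntegrable (fun y => p * gauss p τ y) volume a b :=
      Continuous.intervalIntegrable (by have := gauss_continuous p τ; fun_prop) a b
    have : ∫ y in a..b, (y - p) * gauss p τ y
        = (∫ y in a..b, y * gauss p τ y) - ∫ y in a..b, p * gauss p τ y := by
      rw [← intervalIntegral.integral_sub h1 h2]
      congr 1; funext y; ring
    rw [this, intervalIntegral.integral_const_mul, G]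
  have hGne : G τ a b p ≠ 0 := (hGpos p).ne'
  have hτne : τ ≠ 0 := hτ.ne'
  rw [hderiv, truncMean]
  have key : (∫ y in a..b, y * gauss p τ y) - p * G τ a b p
      = τ * (gauss 0 τ (a - p) - gauss 0 τ (b - p)) := by rw [← hsplit, hkey]
  field_simp
  linear_combination (-1) * key
end

section
/- Let A > 0 and let Z be a standard real Gaussian random variable. Then E[tanh(A + √A·Z)] = E[tanh²(A + √A·Z)], i.e., ∫_ℝ tanh(A + √A·u)·(2π)^{−1/2} e^{−u²/2} du = ∫_ℝ tanh²(A + √A·u)·(2π)^{−1/2} e^{−u²/2} du. (This Nishimori-type identity is the content of the matched (DQ-optimal) row of Table II, where the state-evolution parameters satisfy v_{x̂} = v_{xx̂} = ∫ Du tanh(√A u + A).) -/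
open MeasureTheory Real

lemma one_sub_tanh_aux (x : ℝ) :
    (1 + Real.tanh x) * Real.exp (-(2 * x)) = 1 - Real.tanh x := by
  have hc : Real.cosh x ≠ 0 := ne_of_gt (Real.cosh_pos x)
  rw [Real.tanh_eq_sinh_div_cosh, Real.sinh_eq, Real.cosh_eq]
  have he : Real.exp (-(2 * x)) = Real.exp (-x) * Real.exp (-x) := by
    rw [← Real.exp_add]; ring_nf
  have hprod : Real.exp x * Real.exp (-x) = 1 := by
    rw [← Real.exp_add]; simp
  have hne : Real.exp x + Real.exp (-x) ≠ 0 := by positivity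
  rw [he]
  field_simp
  linear_combination (2 * Real.exp (-x)) * hprod

lemma tanh_key (x : ℝ) :
    (Real.tanh (-x) - Real.tanh (-x) ^ 2) * Real.exp (-(2 * x))
      = -(Real.tanh x - Real.tanh x ^ 2) := by
  rw [Real.tanh_neg]
  linear_combination (-Real.tanh x) * one_sub_tanh_aux x

lemma abs_tanh_le_one (x : ℝ) : |Real.tanh x| ≤ 1 := by
  rw [Real.tanh_eq_sinh_div_cosh, abs_div, abs_of_pos (Real.cosh_pos x),
    div_le_one (Real.cosh_pos x)]
  nlinarith [Real.cosh_sq x, Real.cosh_pos x, abs_nonneg (Real.sinh x),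
    sq_abs (Real.sinh x)]

lemma continuous_tanh' : Continuous Real.tanh := by
  have : Real.tanh = fun x => Real.sinh x / Real.cosh x := by
    funext x; exact Real.tanh_eq_sinh_div_cosh x
  rw [this]
  exact Real.continuous_sinh.div Real.continuous_cosh fun x => ne_of_gt (Real.cosh_pos x)

lemma integrable_aux (A : ℝ) (k : ℕ) :
    Integrable (fun u : ℝ => Real.tanh (A + Real.sqrt A * u) ^ k
      * ((Real.sqrt (2 * Real.pi))⁻¹ * Real.exp (-u ^ 2 / 2))) := by
  have hg : Integrable (fun u : ℝ => Real.exp (-(1/2 : ℝ) * u ^ 2)) :=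
    integrable_exp_neg_mul_sq (by norm_num)
  have hg' : Integrable (fun u : ℝ => (Real.sqrt (2 * Real.pi))⁻¹ * Real.exp (-u ^ 2 / 2)) := by
    have := hg.const_mul (Real.sqrt (2 * Real.pi))⁻¹
    refine this.congr ?_
    filter_upwards with u
    ring_nf
  refine hg'.mono' ?_ ?_
  · exact (((continuous_tanh'.comp (by continuity)).pow k).mul (by continuity)).aestronglyMeasurable
  · filter_upwards with u
    have h1 : |Real.tanh (A + Real.sqrt A * u)| ≤ 1 := abs_tanh_le_one _
    have h2 : (0:ℝ) ≤ (Real.sqrt (2 * Real.pi))⁻¹ * Real.exp (-u ^ 2 / 2) := by positivity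
    rw [Real.norm_eq_abs, abs_mul, abs_pow, abs_of_nonneg h2]
    calc |Real.tanh (A + Real.sqrt A * u)| ^ k * ((Real.sqrt (2 * Real.pi))⁻¹ * Real.exp (-u ^ 2 / 2))
        ≤ 1 ^ k * ((Real.sqrt (2 * Real.pi))⁻¹ * Real.exp (-u ^ 2 / 2)) := by gcongr
      _ = (Real.sqrt (2 * Real.pi))⁻¹ * Real.exp (-u ^ 2 / 2) := by rw [one_pow, one_mul]

/-- Nishimori-type identity: for `A > 0`,
`∫ tanh(A + √A u) Du = ∫ tanh²(A + √A u) Du` under the standard Gaussian measure. -/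
theorem nishimori_identity (A : ℝ) (hA : 0 < A) :
    ∫ u : ℝ, Real.tanh (A + Real.sqrt A * u)
        * ((Real.sqrt (2 * Real.pi))⁻¹ * Real.exp (-u ^ 2 / 2))
      = ∫ u : ℝ, Real.tanh (A + Real.sqrt A * u) ^ 2
          * ((Real.sqrt (2 * Real.pi))⁻¹ * Real.exp (-u ^ 2 / 2)) := by
  set c := Real.sqrt A with hc
  have hc2 : c ^ 2 = A := Real.sq_sqrt hA.le
  set g : ℝ → ℝ := fun u =>
    (Real.tanh (A + c * u) - Real.tanh (A + c * u) ^ 2) * Real.exp (-u ^ 2 / 2) with hgdef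
  have hodd : ∀ u : ℝ, g (-2 * c - u) = -g u := by
    intro u
    have hx : A + c * (-2 * c - u) = -(A + c * u) := by linear_combination (-2) * hc2
    have hexp : Real.exp (-(-2 * c - u) ^ 2 / 2)
        = Real.exp (-u ^ 2 / 2) * Real.exp (-(2 * (A + c * u))) := by
      rw [← Real.exp_add]
      congr 1
      linear_combination (-2) * hc2
    simp only [hgdef, hx, hexp]
    linear_combination Real.exp (-u ^ 2 / 2) * tanh_key (A + c * u)
  have hzero : ∫ u : ℝ, g u = 0 := by
    have h1 : ∫ u : ℝ, g (-2 * c - u) = ∫ u : ℝ, g u :=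
      integral_sub_left_eq_self g volume (-2 * c)
    have h2 : ∫ u : ℝ, g (-2 * c - u) = -∫ u : ℝ, g u := by
      simp_rw [hodd]; exact integral_neg g
    linarith [h1, h2]
  have hi1 := integrable_aux A 1
  have hi2 := integrable_aux A 2
  simp only [pow_one] at hi1
  have hsub : (∫ u : ℝ, Real.tanh (A + Real.sqrt A * u)
        * ((Real.sqrt (2 * Real.pi))⁻¹ * Real.exp (-u ^ 2 / 2)))
      - (∫ u : ℝ, Real.tanh (A + Real.sqrt A * u) ^ 2
        * ((Real.sqrt (2 * Real.pi))⁻¹ * Real.exp (-u ^ 2 / 2))) = 0 := by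
    rw [← integral_sub hi1 hi2]
    have heq : ∀ u : ℝ, Real.tanh (A + Real.sqrt A * u)
          * ((Real.sqrt (2 * Real.pi))⁻¹ * Real.exp (-u ^ 2 / 2))
        - Real.tanh (A + Real.sqrt A * u) ^ 2
          * ((Real.sqrt (2 * Real.pi))⁻¹ * Real.exp (-u ^ 2 / 2))
        = (Real.sqrt (2 * Real.pi))⁻¹ * g u := by
      intro u; simp only [hgdef, ← hc]; ring
    simp_rw [heq, integral_const_mul, hzero, mul_zero]
  linarith [hsub]
end
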